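/- arXiv:1702.08499 — 3 statements merged into one kernel-verified Lean document; each statement's English description precedes it below -/
import Mathlib

section
/- Let $f:\mathbb{R}\to\mathbb{R}$ be bounded and uniformly continuous, and define $S_t(f)(x) = \frac{1}{\sqrt{2\pi}} \int_{-\infty}^{+\infty} f(x-v) \cdot \frac{v^2 e^{-v^2/(2t^2)}}{t^3}\, dv$ for $t>0$, $x \in \mathbb{R}$. Then for every $x \in \mathbb{R}$, $\lim_{t \searrow 0} S_t(f)(x) = f(x)$. -/
open MeasureTheory Filter

/-- The Maxwell–Boltzmann convolution operator. -/
noncomputable def maxwellConv (f : ℝ → ℝ) (t x : ℝ) : ℝ :=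
  (1 / Real.sqrt (2 * Real.pi)) *
    ∫ v : ℝ, f (x - v) * (v ^ 2 * Real.exp (-v ^ 2 / (2 * t ^ 2)) / t ^ 3)

open ProbabilityTheory Topology

/-! After the substitution `v = t u`, `S_t f(x)` is the expectation of `f (x - t Z) Z²` for a
standard Gaussian `Z`. As `t → 0` the integrand tends to `f x * Z²` and is dominated by `M Z²`,
so by dominated convergence the limit is `f x * E[Z²] = f x`. -/

lemma integrable_sq_gaussianReal (μ : ℝ) (v : NNReal) :
    Integrable (fun u : ℝ => u ^ 2) (gaussianReal μ v) :=
  (memLp_id_gaussianReal 2).integrable_sq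

lemma integral_sq_gaussianReal_zero (v : NNReal) :
    ∫ u, u ^ 2 ∂gaussianReal 0 v = v := by
  rw [← variance_id_gaussianReal (μ := 0) (v := v),
    variance_of_integral_eq_zero aemeasurable_id integral_id_gaussianReal]
  rfl

theorem tendsto_integral_comp_sub_mul_mul {μ : Measure ℝ} {f K : ℝ → ℝ} {M : ℝ}
    (hf : Measurable f) (hM : ∀ y, |f y| ≤ M) {x : ℝ} (hfx : ContinuousAt f x)
    (hK : Integrable K μ) :
    Tendsto (fun t => ∫ u, f (x - t * u) * K u ∂μ) (𝓝 0) (𝓝 (f x * ∫ u, K u ∂μ)) := by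
  rw [← integral_const_mul]
  refine tendsto_integral_filter_of_dominated_convergence (fun u => M * |K u|) ?_ ?_
    (hK.abs.const_mul M) ?_
  · exact Eventually.of_forall fun t =>
      ((hf.comp (by fun_prop)).aestronglyMeasurable).mul hK.aestronglyMeasurable
  · refine Eventually.of_forall fun t => Eventually.of_forall fun u => ?_
    rw [norm_mul, Real.norm_eq_abs, Real.norm_eq_abs]
    exact mul_le_mul_of_nonneg_right (hM _) (abs_nonneg _)
  · refine Eventually.of_forall fun u => Tendsto.mul_const _ ?_
    refine hfx.tendsto.comp ?_
    simpa using (tendsto_id (x := 𝓝 (0 : ℝ))).mul_const u |>.const_sub x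

lemma integral_mul_comp_div_div {g K : ℝ → ℝ} {t : ℝ} (ht : 0 < t) :
    ∫ v, g v * (K (v / t) / t) = ∫ u, g (t * u) * K u := by
  have hscale := Measure.integral_comp_mul_left (fun v => g v * (K (v / t) / t)) t
  rw [abs_of_pos (inv_pos.mpr ht), smul_eq_mul, eq_inv_mul_iff_mul_eq₀ ht.ne',
    ← integral_const_mul] at hscale
  rw [← hscale]
  congr 1 with u
  field_simp

lemma maxwellConv_eq_integral_gaussianReal (f : ℝ → ℝ) (x : ℝ) {t : ℝ} (ht : 0 < t) :
    maxwellConv f t x = ∫ u, f (x - t * u) * u ^ 2 ∂gaussianReal 0 1 := by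
  have hkernel : ∀ v, v ^ 2 * Real.exp (-v ^ 2 / (2 * t ^ 2)) / t ^ 3
      = (v / t) ^ 2 * Real.exp (-(v / t) ^ 2 / 2) / t := fun v => by
    field_simp
  simp_rw [maxwellConv, hkernel]
  rw [integral_mul_comp_div_div (g := fun v => f (x - v))
      (K := fun u => u ^ 2 * Real.exp (-u ^ 2 / 2)) ht,
    integral_gaussianReal_eq_integral_smul one_ne_zero, ← integral_const_mul]
  congr 1 with u
  simp only [gaussianPDFReal, smul_eq_mul, NNReal.coe_one, mul_one, sub_zero]
  ring

theorem maxwell_boltzmann_limit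
    (f : ℝ → ℝ)
    (hf_bdd : ∃ M : ℝ, ∀ x : ℝ, |f x| ≤ M)
    (hf_uc : UniformContinuous f) :
    ∀ x : ℝ, Tendsto (fun t : ℝ => maxwellConv f t x)
      (nhdsWithin 0 (Set.Ioi 0)) (nhds (f x)) := by
  intro x
  obtain ⟨M, hM⟩ := hf_bdd
  have hf := hf_uc.continuous
  have hlim := tendsto_integral_comp_sub_mul_mul hf.measurable hM (hf.continuousAt (x := x))
    (integrable_sq_gaussianReal 0 1)
  rw [integral_sq_gaussianReal_zero, NNReal.coe_one, mul_one] at hlim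
  refine (hlim.mono_left nhdsWithin_le_nhds).congr' ?_
  filter_upwards [self_mem_nhdsWithin] with t ht
  exact (maxwellConv_eq_integral_gaussianReal f x ht).symm
end

section
/- Let $f:\mathbb{R}\to\mathbb{R}$ be bounded, uniformly continuous and integrable, and let $S_t(f)(x) = \frac{1}{\sqrt{2\pi}} \int_{-\infty}^{+\infty} f(x-v) \cdot \frac{v^2 e^{-v^2/(2t^2)}}{t^3}\, dv$. Then for every $t>0$ the Fourier transform of $x \mapsto S_t(f)(x)$ equals $\hat{f}(\xi)\, e^{-t^2\xi^2/2}\,(1 - t^2\xi^2)$ for all $\xi \in \mathbb{R}$, where $\hat{f}(\xi) = \frac{1}{\sqrt{2\pi}} \int_{-\infty}^{+\infty} f(x) e^{-i\xi x}\, dx$. -/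
/-!
`S_t f = (2π)^{-1/2} (f ⋆ K_t)` with `K_t v = v² e^{-v²/(2t²)} / t³`, so by the convolution
theorem the claim reduces to `K̂_t ξ = e^{-t²ξ²/2} (1 - t²ξ²)`. This is a second Gaussian moment:
the derivatives of the integrable functions `e^{-bx²+cx}` and `x e^{-bx²+cx}` integrate to zero,
which gives `∫ x² e^{-bx²+cx} = (2b + c²)/(4b²) ∫ e^{-bx²+cx}`; take `b = 1/(2t²)`,
`c = -iξ` and use the Gaussian integral.
-/

open MeasureTheory Filter

/-- The Fourier transform `ĝ(ξ) = (2π)^{-1/2} ∫ g(x) e^{-iξx} dx` of a real function. -/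
noncomputable def fourierXform (g : ℝ → ℝ) (ξ : ℝ) : ℂ :=
  (1 / (Real.sqrt (2 * Real.pi) : ℂ)) *
    ∫ x : ℝ, (g x : ℂ) * Complex.exp (-(Complex.I * ξ * x))

open Complex Real FourierTransform Convolution

theorem hasDerivAt_cexp_neg_mul_sq_add_mul (b c : ℂ) (x : ℝ) :
    HasDerivAt (fun x : ℝ => cexp (-b * x ^ 2 + c * x))
      ((-2 * b * x + c) * cexp (-b * x ^ 2 + c * x)) x := by
  have h : HasDerivAt (fun z : ℂ => -b * z ^ 2 + c * z) (-2 * b * x + c) x :=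
    (((hasDerivAt_pow 2 (x : ℂ)).const_mul (-b)).add
      ((hasDerivAt_id (x : ℂ)).const_mul c)).congr_deriv (by push_cast; ring)
  exact h.cexp.comp_ofReal.congr_deriv (mul_comm _ _)

section GaussianMoments

variable {b : ℂ}

theorem integrable_pow_mul_cexp_neg_mul_sq_add_mul (hb : 0 < b.re) (c : ℂ) (n : ℕ) :
    Integrable (fun x : ℝ => (x : ℂ) ^ n * cexp (-b * x ^ 2 + c * x)) := by
  -- `|x| ^ n ≤ n! (e^x + e^{-x})`, and the factors `e^{±x}` are absorbed into the linear term.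
  have hdom := ((integrable_cexp_quadratic hb (c + 1) 0).norm.add
    (integrable_cexp_quadratic hb (c - 1) 0).norm).const_mul (n.factorial : ℝ)
  refine hdom.mono' (by fun_prop) (Eventually.of_forall fun x => ?_)
  have hshift (s : ℝ) : ‖cexp (-b * x ^ 2 + (c + s) * x + 0)‖
      = ‖cexp (-b * x ^ 2 + c * x)‖ * Real.exp (s * x) := by
    rw [add_zero, add_mul, ← add_assoc, Complex.exp_add, norm_mul, ← ofReal_mul,
      norm_exp_ofReal]
  have hpow : |x| ^ n ≤ n.factorial * (Real.exp x + Real.exp (-x)) := by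
    have h := Real.pow_div_factorial_le_exp |x| (abs_nonneg x) n
    rw [div_le_iff₀ (by positivity)] at h
    have : Real.exp |x| ≤ Real.exp x + Real.exp (-x) := by
      rcases abs_cases x with ⟨hx, -⟩ | ⟨hx, -⟩ <;> rw [hx] <;>
        linarith [Real.exp_pos x, Real.exp_pos (-x)]
    calc |x| ^ n ≤ n.factorial * Real.exp |x| := by linarith
      _ ≤ _ := by gcongr
  have h1 := hshift 1
  have h2 := hshift (-1)
  push_cast at h1 h2
  rw [← sub_eq_add_neg] at h2
  simp only [Pi.add_apply]
  rw [h1, h2, norm_mul, norm_pow, norm_real, Real.norm_eq_abs, one_mul, neg_one_mul]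
  calc |x| ^ n * ‖cexp (-b * x ^ 2 + c * x)‖
      ≤ n.factorial * (Real.exp x + Real.exp (-x)) * ‖cexp (-b * x ^ 2 + c * x)‖ := by gcongr
    _ = _ := by ring

theorem integral_cexp_neg_mul_sq_add_mul (hb : 0 < b.re) (c : ℂ) :
    ∫ x : ℝ, cexp (-b * x ^ 2 + c * x) = (π / b) ^ (1 / 2 : ℂ) * cexp (c ^ 2 / (4 * b)) := by
  simpa [div_neg] using integral_cexp_quadratic (b := -b) (by simpa using hb) c 0

theorem integral_mul_cexp_neg_mul_sq_add_mul (hb : 0 < b.re) (c : ℂ) :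
    ∫ x : ℝ, (x : ℂ) * cexp (-b * x ^ 2 + c * x)
      = c / (2 * b) * ∫ x : ℝ, cexp (-b * x ^ 2 + c * x) := by
  have hb0 : b ≠ 0 := fun h => by simp [h] at hb
  have i0 := integrable_pow_mul_cexp_neg_mul_sq_add_mul hb c 0
  have i1 := integrable_pow_mul_cexp_neg_mul_sq_add_mul hb c 1
  simp only [pow_zero, one_mul, pow_one] at i0 i1
  have h := integral_eq_zero_of_hasDerivAt_of_integrable
    (f' := fun x : ℝ => -2 * b * ((x : ℂ) * cexp (-b * x ^ 2 + c * x))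
      + c * cexp (-b * x ^ 2 + c * x))
    (fun x => (hasDerivAt_cexp_neg_mul_sq_add_mul b c x).congr_deriv (by ring))
    ((i1.const_mul _).add (i0.const_mul _)) i0
  rw [integral_add (i1.const_mul _) (i0.const_mul _), integral_const_mul,
    integral_const_mul] at h
  generalize ∫ x : ℝ, (x : ℂ) * cexp (-b * x ^ 2 + c * x) = J₁ at h ⊢
  generalize ∫ x : ℝ, cexp (-b * x ^ 2 + c * x) = J₀ at h ⊢
  field_simp
  linear_combination -h

theorem integral_sq_mul_cexp_neg_mul_sq_add_mul (hb : 0 < b.re) (c : ℂ) :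
    ∫ x : ℝ, (x : ℂ) ^ 2 * cexp (-b * x ^ 2 + c * x)
      = (2 * b + c ^ 2) / (4 * b ^ 2) * ∫ x : ℝ, cexp (-b * x ^ 2 + c * x) := by
  have hb0 : b ≠ 0 := fun h => by simp [h] at hb
  have i0 := integrable_pow_mul_cexp_neg_mul_sq_add_mul hb c 0
  have i1 := integrable_pow_mul_cexp_neg_mul_sq_add_mul hb c 1
  have i2 := integrable_pow_mul_cexp_neg_mul_sq_add_mul hb c 2
  simp only [pow_zero, one_mul, pow_one] at i0 i1
  have i12 : Integrable (fun x : ℝ => c * ((x : ℂ) * cexp (-b * x ^ 2 + c * x))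
      + -2 * b * ((x : ℂ) ^ 2 * cexp (-b * x ^ 2 + c * x))) :=
    (i1.const_mul _).add (i2.const_mul _)
  have h := integral_eq_zero_of_hasDerivAt_of_integrable
    (f' := fun x : ℝ => cexp (-b * x ^ 2 + c * x)
      + (c * ((x : ℂ) * cexp (-b * x ^ 2 + c * x))
        + -2 * b * ((x : ℂ) ^ 2 * cexp (-b * x ^ 2 + c * x))))
    (fun x => ((hasDerivAt_id x).ofReal_comp.mul
      (hasDerivAt_cexp_neg_mul_sq_add_mul b c x)).congr_deriv (by simp only [id, ofReal_one]; ring))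
    (i0.add i12) i1
  rw [integral_add i0 i12,
    integral_add (i1.const_mul _) (i2.const_mul _), integral_const_mul, integral_const_mul,
    integral_mul_cexp_neg_mul_sq_add_mul hb] at h
  generalize ∫ x : ℝ, (x : ℂ) ^ 2 * cexp (-b * x ^ 2 + c * x) = J₂ at h ⊢
  generalize ∫ x : ℝ, cexp (-b * x ^ 2 + c * x) = J₀ at h ⊢
  field_simp at h ⊢
  linear_combination -h

end GaussianMoments

theorem fourierXform_eq_fourier (g : ℝ → ℝ) (ξ : ℝ) :
    fourierXform g ξ = 1 / (√(2 * π) : ℂ) * 𝓕 (fun x => (g x : ℂ)) (ξ / (2 * π)) := by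
  rw [fourierXform, Real.fourier_real_eq_integral_exp_smul]
  congr 1
  refine integral_congr_ae (Eventually.of_forall fun x => ?_)
  dsimp only
  rw [smul_eq_mul, mul_comm]
  congr 2
  push_cast
  field_simp

theorem fourierXform_const_mul (c : ℝ) (g : ℝ → ℝ) (ξ : ℝ) :
    fourierXform (fun x => c * g x) ξ = c * fourierXform g ξ := by
  simp only [fourierXform, ofReal_mul, mul_assoc, integral_const_mul]
  ring

theorem fourierXform_convolution {f g : ℝ → ℝ} (hf : Integrable f) (hg : Integrable g) (ξ : ℝ) :
    fourierXform (fun x => ∫ v, f (x - v) * g v) ξ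
      = √(2 * π) * (fourierXform f ξ * fourierXform g ξ) := by
  have hF : 𝓕 (fun x => ((∫ v, f (x - v) * g v : ℝ) : ℂ)) (ξ / (2 * π))
      = 𝓕 (fun x => (g x : ℂ)) (ξ / (2 * π)) * 𝓕 (fun x => (f x : ℂ)) (ξ / (2 * π)) := by
    -- Mathlib's convolution theorem carries a different (defeq) normed structure on `ℂ`,
    -- so it is matched up to defeq through `congrArg` rather than rewritten with.
    refine (congrArg (fun F : ℝ → ℂ => 𝓕 F (ξ / (2 * π))) ?_).trans
      (Real.fourier_mul_convolution_eq (R := ℂ) hg.ofReal hf.ofReal _)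
    ext x
    rw [convolution_def, ← integral_complex_ofReal]
    congr 1
    ext v
    simp [mul_comm]
  rw [fourierXform_eq_fourier, hF, fourierXform_eq_fourier, fourierXform_eq_fourier]
  field_simp

noncomputable def maxwellKernel (t v : ℝ) : ℝ := v ^ 2 * Real.exp (-v ^ 2 / (2 * t ^ 2)) / t ^ 3

theorem integrable_maxwellKernel (t : ℝ) : Integrable (maxwellKernel t) := by
  rcases eq_or_ne t 0 with rfl | ht
  · have h0 : maxwellKernel 0 = 0 := by ext v; simp [maxwellKernel]
    rw [h0]
    exact integrable_zero _ _ _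
  have h := integrable_rpow_mul_exp_neg_mul_sq (b := 1 / (2 * t ^ 2)) (by positivity)
    (s := 2) (by norm_num)
  refine (h.div_const (t ^ 3)).congr (Eventually.of_forall fun v => ?_)
  simp only [maxwellKernel, Real.rpow_two]
  ring_nf

theorem fourierXform_maxwellKernel {t : ℝ} (ht : 0 < t) (ξ : ℝ) :
    fourierXform (maxwellKernel t) ξ
      = ((Real.exp (-t ^ 2 * ξ ^ 2 / 2) * (1 - t ^ 2 * ξ ^ 2) : ℝ) : ℂ) := by
  set b : ℝ := 1 / (2 * t ^ 2) with hb_def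
  have hb : 0 < b := by positivity
  have hintegrand (v : ℝ) : (maxwellKernel t v : ℂ) * cexp (-(I * ξ * v))
      = 1 / (t : ℂ) ^ 3 * ((v : ℂ) ^ 2 * cexp (-(b : ℂ) * v ^ 2 + -(I * ξ) * v)) := by
    have h : -(b : ℂ) * v ^ 2 + -(I * ξ) * v = ((-v ^ 2 / (2 * t ^ 2) : ℝ) : ℂ) + -(I * ξ * v) := by
      push_cast [hb_def]
      ring
    rw [h, Complex.exp_add, ← ofReal_exp, maxwellKernel]
    push_cast
    ring
  have hroot : (π / (b : ℂ)) ^ (1 / 2 : ℂ) = √(2 * π) * t := by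
    have h : π / (b : ℂ) = ((2 * π * t ^ 2 : ℝ) : ℂ) := by
      push_cast [hb_def]
      field_simp
    rw [h, show (1 / 2 : ℂ) = ((1 / 2 : ℝ) : ℂ) by push_cast; rfl, ← ofReal_cpow (by positivity),
      ← Real.sqrt_eq_rpow, Real.sqrt_mul (by positivity), Real.sqrt_sq ht.le, ofReal_mul]
  have hsq : (-(I * ξ)) ^ 2 = -(ξ : ℂ) ^ 2 := by
    rw [neg_sq, mul_pow, I_sq]
    ring
  have hexp : (-(I * ξ)) ^ 2 / (4 * (b : ℂ)) = ((-t ^ 2 * ξ ^ 2 / 2 : ℝ) : ℂ) := by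
    rw [hsq]
    push_cast [hb_def]
    field_simp
    ring
  have ht' : (t : ℂ) ≠ 0 := by exact_mod_cast ht.ne'
  rw [fourierXform]
  simp_rw [hintegrand]
  rw [integral_const_mul, integral_sq_mul_cexp_neg_mul_sq_add_mul (by simpa using hb),
    integral_cexp_neg_mul_sq_add_mul (by simpa using hb), hroot, hexp, hsq, ← ofReal_exp]
  push_cast [hb_def]
  field_simp
  ring

theorem maxwell_boltzmann_fourier_transform_general
    (f : ℝ → ℝ)
    (hf_int : Integrable f)
    (t : ℝ) (ht : 0 < t) :
    ∀ ξ : ℝ, fourierXform (fun x => maxwellConv f t x) ξ =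
      fourierXform f ξ * ((Real.exp (-t ^ 2 * ξ ^ 2 / 2) * (1 - t ^ 2 * ξ ^ 2) : ℝ) : ℂ) := by
  intro ξ
  show fourierXform (fun x => 1 / √(2 * π) * ∫ v, f (x - v) * maxwellKernel t v) ξ = _
  rw [fourierXform_const_mul, fourierXform_convolution hf_int (integrable_maxwellKernel t),
    fourierXform_maxwellKernel ht]
  push_cast
  field_simp

theorem maxwell_boltzmann_fourier_transform
    (f : ℝ → ℝ)
    (hf_bdd : ∃ M : ℝ, ∀ x : ℝ, |f x| ≤ M)
    (hf_uc : UniformContinuous f)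
    (hf_int : Integrable f)
    (t : ℝ) (ht : 0 < t) :
    ∀ ξ : ℝ, fourierXform (fun x => maxwellConv f t x) ξ =
      fourierXform f ξ * ((Real.exp (-t ^ 2 * ξ ^ 2 / 2) * (1 - t ^ 2 * ξ ^ 2) : ℝ) : ℂ) :=
  maxwell_boltzmann_fourier_transform_general f hf_int t ht
end

section
/- Suppose $f, f', f'', f''', f^{(4)} : \mathbb{R} \to \mathbb{R}$ exist, are bounded and uniformly continuous on $\mathbb{R}$, and $f$ is integrable. Then $u(x,t) := S_t(f)(x) = \frac{1}{\sqrt{2\pi}} \int_{-\infty}^{+\infty} f(x-v) \cdot \frac{v^2 e^{-v^2/(2t^2)}}{t^3}\, dv$ solves the initial value problem $\frac{\partial u}{\partial t}(x,t) = t^3 \frac{\partial^4 u}{\partial x^4}(x,t) - t^2 \frac{\partial^3 u}{\partial x^2 \partial t}(x,t) + 3t \frac{\partial^2 u}{\partial x^2}(x,t)$ for all $t > 0$, $x \in \mathbb{R}$, together with $\lim_{s \searrow 0} u(x,s) = f(x)$ for every $x \in \mathbb{R}$. -/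
open MeasureTheory Filter

/-!
The substitution `v = t w` turns `S_t f (x)` into `(2π)^(-1/2) ∫ f (x - t w) w² e^(-w²/2) dw`, in
which `t` and `x` only enter through the argument of `f`. Hence, with
`J k n t x = ∫ f⁽ᵏ⁾ (x - t w) wⁿ e^(-w²/2) dw` (`gaussConv (iteratedDeriv k f) n t x`), we get
`∂ₓ J k n = J (k+1) n` and `∂ₜ J k n = -J (k+1) (n+1)` by differentiating under the integral, and
the equation becomes a linear relation between such integrals. It follows from integration by
parts against the Gaussian, `J k (n+1) = n J k (n-1) - t J (k+1) n`. The initial condition is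
dominated convergence, with the normalisation `∫ w² e^(-w²/2) dw = √(2π)`.
-/

open Real Topology

noncomputable def gaussianWeight (n : ℕ) (w : ℝ) : ℝ := w ^ n * exp (-w ^ 2 / 2)

noncomputable def gaussConv (h : ℝ → ℝ) (n : ℕ) (t x : ℝ) : ℝ :=
  ∫ w, h (x - t * w) * gaussianWeight n w

lemma integrable_gaussianWeight (n : ℕ) : Integrable (gaussianWeight n) := by
  refine (integrable_rpow_mul_exp_neg_mul_sq (b := 1 / 2) (by norm_num)
    (s := n) (by linarith [n.cast_nonneg (α := ℝ)])).congr (.of_forall fun w => ?_)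
  simp only [gaussianWeight, rpow_natCast]
  ring_nf

lemma hasDerivAt_gaussianWeight (m : ℕ) (w : ℝ) :
    HasDerivAt (gaussianWeight m)
      (m * gaussianWeight (m - 1) w - gaussianWeight (m + 1) w) w := by
  have hexp : HasDerivAt (fun w : ℝ => exp (-w ^ 2 / 2)) (exp (-w ^ 2 / 2) * -w) w := by
    convert (((hasDerivAt_pow 2 w).neg.div_const 2).exp) using 1
    · ext; simp
    · simp only [mul_neg, Pi.neg_apply, Nat.cast_ofNat, Nat.add_one_sub_one, pow_one]; ring
  refine ((hasDerivAt_pow m w).mul hexp).congr_deriv ?_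
  rcases m with _ | m
  · simp [gaussianWeight, mul_comm]
  · simp only [gaussianWeight]; push_cast; ring

section

variable {h h' : ℝ → ℝ} {M M' : ℝ}

lemma integrable_comp_mul_gaussianWeight (hm : Measurable h) (hM : ∀ z, |h z| ≤ M)
    (n : ℕ) (t x : ℝ) : Integrable (fun w => h (x - t * w) * gaussianWeight n w) :=
  (integrable_gaussianWeight n).bdd_mul (hm.comp (by fun_prop)).aestronglyMeasurable
    (.of_forall fun w => hM (x - t * w))

/-- At `m = 0` the truncated `m - 1` is harmless, being multiplied by `m`. -/
lemma gaussConv_succ (hh : ∀ z, HasDerivAt h (h' z) z) (hM : ∀ z, |h z| ≤ M)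
    (hM' : ∀ z, |h' z| ≤ M') (m : ℕ) (t x : ℝ) :
    gaussConv h (m + 1) t x = m * gaussConv h (m - 1) t x - t * gaussConv h' m t x := by
  have hm : Measurable h :=
    (continuous_iff_continuousAt.2 fun z => (hh z).continuousAt).measurable
  have hm' : Measurable h' := funext (fun z => (hh z).deriv) ▸ measurable_deriv h
  have i₁ := integrable_comp_mul_gaussianWeight hm hM (m - 1) t x
  have i₂ := integrable_comp_mul_gaussianWeight hm hM (m + 1) t x
  have i₃ := integrable_comp_mul_gaussianWeight hm' hM' m t x
  have hderiv : ∀ w, HasDerivAt (fun w => h (x - t * w) * gaussianWeight m w)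
      (m * (h (x - t * w) * gaussianWeight (m - 1) w) - h (x - t * w) * gaussianWeight (m + 1) w
        + -t * (h' (x - t * w) * gaussianWeight m w)) w := by
    intro w
    have hin : HasDerivAt (fun w => x - t * w) (-t) w := by
      simpa using ((hasDerivAt_id w).const_mul t).const_sub x
    exact (((hh _).comp w hin).mul (hasDerivAt_gaussianWeight m w)).congr_deriv
      (by simp only [Function.comp_apply]; ring)
  have i₁₂ : Integrable (fun w => m * (h (x - t * w) * gaussianWeight (m - 1) w)
      - h (x - t * w) * gaussianWeight (m + 1) w) := (i₁.const_mul _).sub i₂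
  have i₃' : Integrable (fun w => -t * (h' (x - t * w) * gaussianWeight m w)) := i₃.const_mul _
  have hzero := integral_eq_zero_of_hasDerivAt_of_integrable hderiv (i₁₂.add i₃')
    (integrable_comp_mul_gaussianWeight hm hM m t x)
  rw [integral_add i₁₂ i₃', integral_sub (i₁.const_mul _) i₂,
    integral_const_mul, integral_const_mul] at hzero
  unfold gaussConv
  linear_combination -hzero

lemma hasDerivAt_gaussConv_space (hh : ∀ z, HasDerivAt h (h' z) z) (hM : ∀ z, |h z| ≤ M)
    (hM' : ∀ z, |h' z| ≤ M') (n : ℕ) (t x : ℝ) :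
    HasDerivAt (gaussConv h n t) (gaussConv h' n t x) x := by
  have hm : Measurable h :=
    (continuous_iff_continuousAt.2 fun z => (hh z).continuousAt).measurable
  have hm' : Measurable h' := funext (fun z => (hh z).deriv) ▸ measurable_deriv h
  refine (hasDerivAt_integral_of_dominated_loc_of_deriv_le (x₀ := x)
    (F' := fun y w => h' (y - t * w) * gaussianWeight n w)
    (bound := fun w => M' * ‖gaussianWeight n w‖) Filter.univ_mem
    (.of_forall fun y => (integrable_comp_mul_gaussianWeight hm hM n t y).aestronglyMeasurable)
    (integrable_comp_mul_gaussianWeight hm hM n t x)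
    (integrable_comp_mul_gaussianWeight hm' hM' n t x).aestronglyMeasurable
    (.of_forall fun w y _ => ?_) ((integrable_gaussianWeight n).norm.const_mul M')
    (.of_forall fun w y _ => ?_)).2
  · rw [norm_mul]
    exact mul_le_mul_of_nonneg_right (hM' _) (norm_nonneg _)
  · have hin : HasDerivAt (fun y => y - t * w) 1 y := (hasDerivAt_id y).sub_const (t * w)
    simpa using ((hh _).comp y hin).mul_const (gaussianWeight n w)

lemma hasDerivAt_gaussConv_time (hh : ∀ z, HasDerivAt h (h' z) z) (hM : ∀ z, |h z| ≤ M)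
    (hM' : ∀ z, |h' z| ≤ M') (n : ℕ) (t x : ℝ) :
    HasDerivAt (fun s => gaussConv h n s x) (-gaussConv h' (n + 1) t x) t := by
  have hm : Measurable h :=
    (continuous_iff_continuousAt.2 fun z => (hh z).continuousAt).measurable
  have hm' : Measurable h' := funext (fun z => (hh z).deriv) ▸ measurable_deriv h
  have := hasDerivAt_integral_of_dominated_loc_of_deriv_le (x₀ := t)
    (F' := fun s w => -(h' (x - s * w) * gaussianWeight (n + 1) w))
    (bound := fun w => M' * ‖gaussianWeight (n + 1) w‖)
    Filter.univ_mem
    (.of_forall fun s => (integrable_comp_mul_gaussianWeight hm hM n s x).aestronglyMeasurable)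
    (integrable_comp_mul_gaussianWeight hm hM n t x)
    (integrable_comp_mul_gaussianWeight hm' hM' (n + 1) t x).neg.aestronglyMeasurable
    (.of_forall fun w s _ => ?_) ((integrable_gaussianWeight (n + 1)).norm.const_mul M')
    (.of_forall fun w s _ => ?_)
  · simpa only [gaussConv, integral_neg] using this.2
  · rw [norm_neg, norm_mul]
    exact mul_le_mul_of_nonneg_right (hM' _) (norm_nonneg _)
  · have hin : HasDerivAt (fun s => x - s * w) (-w) s := by
      simpa using ((hasDerivAt_id s).mul_const w).const_sub x
    exact (((hh _).comp s hin).mul_const (gaussianWeight n w)).congr_deriv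
      (by simp only [gaussianWeight]; ring)

lemma tendsto_gaussConv_zero (hc : Continuous h) (hM : ∀ z, |h z| ≤ M) (n : ℕ) (x : ℝ) :
    Tendsto (fun s => gaussConv h n s x) (𝓝 0) (𝓝 (h x * ∫ w, gaussianWeight n w)) := by
  rw [← integral_const_mul]
  refine tendsto_integral_filter_of_dominated_convergence (fun w => M * ‖gaussianWeight n w‖)
    (.of_forall fun s =>
      (integrable_comp_mul_gaussianWeight hc.measurable hM n s x).aestronglyMeasurable)
    (.of_forall fun s => .of_forall fun w => ?_) ((integrable_gaussianWeight n).norm.const_mul M)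
    (.of_forall fun w => ?_)
  · rw [norm_mul]
    exact mul_le_mul_of_nonneg_right (hM _) (norm_nonneg _)
  · have : Tendsto (fun s => x - s * w) (𝓝 0) (𝓝 x) := by
      simpa using (by fun_prop : Continuous fun s : ℝ => x - s * w).tendsto 0
    exact ((hc.tendsto x).comp this).mul_const _

end

lemma integral_gaussianWeight_two : ∫ w, gaussianWeight 2 w = √(2 * π) := by
  have h := gaussConv_succ (h := fun _ => 1) (h' := fun _ => 0) (M := 1) (M' := 0)
    (fun z => hasDerivAt_const z 1) (by simp) (by simp) 1 0 0
  norm_num [gaussConv] at h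
  rw [h]
  convert integral_gaussian (1 / 2) using 1
  · simp only [gaussianWeight]; ring_nf
  · ring_nf

lemma maxwellConv_eq_gaussConv (f : ℝ → ℝ) {t : ℝ} (ht : 0 < t) (x : ℝ) :
    maxwellConv f t x = 1 / √(2 * π) * gaussConv f 2 t x := by
  set g : ℝ → ℝ := fun v => f (x - v) * (v ^ 2 * exp (-v ^ 2 / (2 * t ^ 2)) / t ^ 3)
  have hsub := Measure.integral_comp_mul_left g t
  rw [smul_eq_mul, abs_of_pos (inv_pos.2 ht), eq_inv_mul_iff_mul_eq₀ ht.ne',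
    ← integral_const_mul] at hsub
  rw [maxwellConv, ← hsub]
  congr 1
  refine integral_congr_ae (.of_forall fun w => ?_)
  have hexp : -(t * w) ^ 2 / (2 * t ^ 2) = -w ^ 2 / 2 := by field_simp
  simp only [g, gaussianWeight, hexp]
  field_simp

lemma tendsto_maxwellConv_nhdsGT_zero {f : ℝ → ℝ} {M : ℝ} (hc : Continuous f)
    (hM : ∀ z, |f z| ≤ M) (x : ℝ) :
    Tendsto (fun s => maxwellConv f s x) (𝓝[>] 0) (𝓝 (f x)) := by
  have hlim := ((tendsto_gaussConv_zero hc hM 2 x).mono_left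
    (nhdsWithin_le_nhds (s := Set.Ioi 0))).const_mul (1 / √(2 * π))
  rw [integral_gaussianWeight_two, mul_left_comm, one_div_mul_cancel (by positivity), mul_one]
    at hlim
  refine hlim.congr' ?_
  filter_upwards [self_mem_nhdsWithin] with s hs
  exact (maxwellConv_eq_gaussConv f hs x).symm

section

variable {f : ℝ → ℝ} {k : ℕ} {t : ℝ}

lemma hasDerivAt_iteratedDeriv_of_differentiable (hf : Differentiable ℝ (iteratedDeriv k f))
    (z : ℝ) : HasDerivAt (iteratedDeriv k f) (iteratedDeriv (k + 1) f z) z :=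
  iteratedDeriv_succ (f := f) ▸ (hf z).hasDerivAt

lemma iteratedDeriv_gaussConv (hdiff : ∀ i < k, Differentiable ℝ (iteratedDeriv i f))
    (hbdd : ∀ i ≤ k, ∃ M, ∀ z, |iteratedDeriv i f z| ≤ M) (n : ℕ) (t : ℝ) :
    iteratedDeriv k (gaussConv f n t) = gaussConv (iteratedDeriv k f) n t := by
  induction k with
  | zero => simp
  | succ k ih =>
    obtain ⟨M, hM⟩ := hbdd k k.le_succ
    obtain ⟨M', hM'⟩ := hbdd (k + 1) le_rfl
    have hh := hasDerivAt_iteratedDeriv_of_differentiable (hdiff k k.lt_succ_self)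
    rw [iteratedDeriv_succ, ih (fun i hi => hdiff i (hi.trans k.lt_succ_self))
      (fun i hi => hbdd i (hi.trans k.le_succ))]
    exact funext fun x => (hasDerivAt_gaussConv_space hh hM hM' n t x).deriv

lemma gaussConv_iteratedDeriv_pde (hdiff : ∀ i < 4, Differentiable ℝ (iteratedDeriv i f))
    (hbdd : ∀ i ≤ 4, ∃ M, ∀ z, |iteratedDeriv i f z| ≤ M) (t x : ℝ) :
    -gaussConv (iteratedDeriv 1 f) 3 t x =
      t ^ 3 * gaussConv (iteratedDeriv 4 f) 2 t x + t ^ 2 * gaussConv (iteratedDeriv 3 f) 3 t x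
        + 3 * t * gaussConv (iteratedDeriv 2 f) 2 t x := by
  choose M hM using hbdd
  have parts : ∀ i < 4, ∀ m : ℕ, gaussConv (iteratedDeriv i f) (m + 1) t x =
      m * gaussConv (iteratedDeriv i f) (m - 1) t x
        - t * gaussConv (iteratedDeriv (i + 1) f) m t x :=
    fun i hi m => gaussConv_succ (hasDerivAt_iteratedDeriv_of_differentiable (hdiff i hi))
      (hM i hi.le) (hM (i + 1) hi) m t x
  have h₁ := parts 1 (by norm_num) 2
  have h₂ := parts 1 (by norm_num) 0
  have h₃ := parts 2 (by norm_num) 1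
  have h₄ := parts 3 (by norm_num) 2
  norm_num at h₁ h₂ h₃ h₄ ⊢
  linear_combination -h₁ - 2 * h₂ - 2 * t * h₃ - t ^ 2 * h₄

lemma iteratedDeriv_maxwellConv (hdiff : ∀ i < k, Differentiable ℝ (iteratedDeriv i f))
    (hbdd : ∀ i ≤ k, ∃ M, ∀ z, |iteratedDeriv i f z| ≤ M) (ht : 0 < t) (x : ℝ) :
    iteratedDeriv k (fun y => maxwellConv f t y) x =
      1 / √(2 * π) * gaussConv (iteratedDeriv k f) 2 t x := by
  simp only [maxwellConv_eq_gaussConv f ht, iteratedDeriv_const_mul_field,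
    iteratedDeriv_gaussConv hdiff hbdd]

lemma deriv_iteratedDeriv_maxwellConv (hdiff : ∀ i ≤ k, Differentiable ℝ (iteratedDeriv i f))
    (hbdd : ∀ i ≤ k + 1, ∃ M, ∀ z, |iteratedDeriv i f z| ≤ M) (ht : 0 < t) (x : ℝ) :
    deriv (fun s => iteratedDeriv k (fun y => maxwellConv f s y) x) t =
      1 / √(2 * π) * -gaussConv (iteratedDeriv (k + 1) f) 3 t x := by
  obtain ⟨M, hM⟩ := hbdd k k.le_succ
  obtain ⟨M', hM'⟩ := hbdd (k + 1) le_rfl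
  have hev : (fun s => iteratedDeriv k (fun y => maxwellConv f s y) x) =ᶠ[𝓝 t]
      fun s => 1 / √(2 * π) * gaussConv (iteratedDeriv k f) 2 s x := by
    filter_upwards [Ioi_mem_nhds ht] with s hs
    exact iteratedDeriv_maxwellConv (fun i hi => hdiff i hi.le)
      (fun i hi => hbdd i (hi.trans k.le_succ)) hs x
  rw [hev.deriv_eq]
  exact ((hasDerivAt_gaussConv_time (hasDerivAt_iteratedDeriv_of_differentiable (hdiff k le_rfl))
    hM hM' 2 t x).const_mul _).deriv

end

theorem maxwell_boltzmann_ivp_general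
    (f : ℝ → ℝ)
    (hf_diff : ∀ i < 4, Differentiable ℝ (iteratedDeriv i f))
    (hf_bdd : ∀ i ≤ 4, ∃ M : ℝ, ∀ x : ℝ, |iteratedDeriv i f x| ≤ M) :
    (∀ t > (0 : ℝ), ∀ x : ℝ,
        deriv (fun s => maxwellConv f s x) t =
          t ^ 3 * iteratedDeriv 4 (fun y => maxwellConv f t y) x -
            t ^ 2 * deriv (fun s => iteratedDeriv 2 (fun y => maxwellConv f s y) x) t +
            3 * t * iteratedDeriv 2 (fun y => maxwellConv f t y) x) ∧
      (∀ x : ℝ, Tendsto (fun s : ℝ => maxwellConv f s x)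
        (nhdsWithin 0 (Set.Ioi 0)) (nhds (f x))) := by
  refine ⟨fun t ht x => ?_, fun x => ?_⟩
  · have hu₀ := deriv_iteratedDeriv_maxwellConv (k := 0) (fun i hi => hf_diff i (by omega))
      (fun i hi => hf_bdd i (by omega)) ht x
    simp only [iteratedDeriv_zero] at hu₀
    rw [hu₀, deriv_iteratedDeriv_maxwellConv (fun i hi => hf_diff i (by omega))
        (fun i hi => hf_bdd i (by omega)) ht,
      iteratedDeriv_maxwellConv hf_diff hf_bdd ht,
      iteratedDeriv_maxwellConv (fun i hi => hf_diff i (by omega))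
        (fun i hi => hf_bdd i (by omega)) ht]
    linear_combination 1 / √(2 * π) * gaussConv_iteratedDeriv_pde hf_diff hf_bdd t x
  · obtain ⟨M, hM⟩ := hf_bdd 0 (by norm_num)
    simp only [iteratedDeriv_zero] at hM
    exact tendsto_maxwellConv_nhdsGT_zero
      (by simpa using (hf_diff 0 (by norm_num)).continuous) hM x

theorem maxwell_boltzmann_ivp
    (f : ℝ → ℝ)
    (hf_diff : ∀ i < 4, Differentiable ℝ (iteratedDeriv i f))
    (hf_bdd : ∀ i ≤ 4, ∃ M : ℝ, ∀ x : ℝ, |iteratedDeriv i f x| ≤ M)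
    (hf_uc : ∀ i ≤ 4, UniformContinuous (iteratedDeriv i f))
    (hf_int : Integrable f) :
    (∀ t > (0 : ℝ), ∀ x : ℝ,
        deriv (fun s => maxwellConv f s x) t =
          t ^ 3 * iteratedDeriv 4 (fun y => maxwellConv f t y) x -
            t ^ 2 * deriv (fun s => iteratedDeriv 2 (fun y => maxwellConv f s y) x) t +
            3 * t * iteratedDeriv 2 (fun y => maxwellConv f t y) x) ∧
      (∀ x : ℝ, Tendsto (fun s : ℝ => maxwellConv f s x)
        (nhdsWithin 0 (Set.Ioi 0)) (nhds (f x))) :=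
  maxwell_boltzmann_ivp_general f hf_diff hf_bdd
end
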